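/- Let N be a finite nonempty player set and for each nonempty S ⊆ N let a_S < b_S be reals; set μ_S = (a_S + b_S)/2. Suppose there exist d, r : N → ℝ with r_i ≥ 0 for all i, d(N) = μ_N, r(N) = 1, such that for every nonempty S ⊆ N the pushforward of Unif[a_N, b_N] under the map z ↦ d(S) + r(S)·(z − μ_N) second-order stochastically dominates Unif[a_S, b_S]. Then both the core of the mean game μ (value μ_S on each nonempty S, 0 on ∅) and the core of the lower bound game a (value a_S on each nonempty S, 0 on ∅) are nonempty. -/

import Mathlib

open MeasureTheory ProbabilityTheory
open scoped NNReal ENNReal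

/-- `P` second-order stochastically dominates `Q`. -/
def SSD (P Q : Measure ℝ) : Prop :=
  ∀ u : ℝ, (∫ z in Set.Iic u, (cdf P z - cdf Q z)) ≤ 0

/-- The uniform probability measure on the interval `[a, b]`. -/
noncomputable def unif (a b : ℝ) : Measure ℝ :=
  (ENNReal.ofReal (b - a))⁻¹ • (volume.restrict (Set.Icc a b))

/-- The core of a TU-game `v` on the finite player set `N`. -/
def core {N : Type*} [Fintype N] (v : Finset N → ℝ) : Set (N → ℝ) :=
  {x | (∀ S : Finset N, v S ≤ ∑ i ∈ S, x i) ∧ ∑ i : N, x i = v Finset.univ}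

/-!
Second-order dominance `P ⪰ Q` says `∫_{(-∞,u]} F_P ≤ ∫_{(-∞,u]} F_Q` for every `u`. Far to the
right both sides equal `u` minus the mean, so the mean `d(S)` of the pushforward is at least
`μ_S`; at `u = a_S` the right side vanishes, so the pushforward has no mass below `a_S`, i.e. its
lower endpoint `d(S) + r(S) (a_N - μ_N)` is at least `a_S`. (The pushforward is uniform when
`r(S) > 0` and a point mass when `r(S) = 0`.) Hence `d` is in the core of the mean game and
`d + r (a_N - μ_N)` in the core of the lower bound game.
-/

open Set

section IntegralIic

variable {f : ℝ → ℝ} {a u : ℝ}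

theorem integrableOn_Iic_of_continuous_of_eqOn_Iic_zero (hf : Continuous f)
    (h0 : EqOn f 0 (Iic a)) : IntegrableOn f (Iic u) := by
  have hIic : IntegrableOn f (Iic a) :=
    (integrableOn_congr_fun h0 measurableSet_Iic).2 integrableOn_zero
  rcases le_total u a with hua | hau
  · exact hIic.mono_set (Iic_subset_Iic.2 hua)
  · rw [← Iic_union_Ioc_eq_Iic hau]
    exact hIic.union hf.integrableOn_Ioc

theorem setIntegral_Iic_eq_intervalIntegral_of_eqOn_Iic_zero (hf : Continuous f)
    (h0 : EqOn f 0 (Iic a)) (hau : a ≤ u) : ∫ z in Iic u, f z = ∫ z in a..u, f z := by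
  rw [← Iic_union_Ioc_eq_Iic hau,
    setIntegral_union (Iic_disjoint_Ioc le_rfl) measurableSet_Ioc
      (integrableOn_Iic_of_continuous_of_eqOn_Iic_zero hf h0) hf.integrableOn_Ioc,
    setIntegral_congr_fun measurableSet_Iic h0, intervalIntegral.integral_of_le hau]
  simp

end IntegralIic

theorem SSD.setIntegral_cdf_le {P Q : Measure ℝ} (h : SSD P Q) {u : ℝ}
    (hP : IntegrableOn (cdf P) (Iic u)) (hQ : IntegrableOn (cdf Q) (Iic u)) :
    ∫ z in Iic u, cdf P z ≤ ∫ z in Iic u, cdf Q z := by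
  have := h u
  rw [integral_sub hP hQ] at this
  linarith

noncomputable def unifCdf (a b u : ℝ) : ℝ := max 0 (min ((u - a) / (b - a)) 1)

section Uniform

variable {a b u : ℝ}

theorem continuous_unifCdf (a b : ℝ) : Continuous (unifCdf a b) := by
  unfold unifCdf; fun_prop

theorem unifCdf_of_le (hab : a < b) (hu : u ≤ a) : unifCdf a b u = 0 :=
  max_eq_left <| (min_le_left _ _).trans <|
    div_nonpos_of_nonpos_of_nonneg (by linarith) (by linarith)

theorem unifCdf_of_mem_Icc (hab : a < b) (hu : u ∈ Icc a b) :
    unifCdf a b u = (u - a) / (b - a) := by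
  have hba : 0 < b - a := sub_pos.2 hab
  rw [unifCdf, min_eq_left ((div_le_one hba).2 (by linarith [hu.2])),
    max_eq_right (div_nonneg (by linarith [hu.1]) hba.le)]

theorem unifCdf_of_ge (hab : a < b) (hu : b ≤ u) : unifCdf a b u = 1 := by
  rw [unifCdf, min_eq_right ((le_div_iff₀ (sub_pos.2 hab)).2 (by linarith)),
    max_eq_right zero_le_one]

theorem unif_Iic (a b u : ℝ) :
    unif a b (Iic u) = (ENNReal.ofReal (b - a))⁻¹ * ENNReal.ofReal (min b u - a) := by
  have : Iic u ∩ Icc a b = Icc a (min b u) := by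
    ext z; simp [and_comm, and_assoc]
  rw [unif, Measure.smul_apply, Measure.restrict_apply measurableSet_Iic, this,
    Real.volume_Icc, smul_eq_mul]

theorem isProbabilityMeasure_unif (hab : a < b) : IsProbabilityMeasure (unif a b) := by
  constructor
  rw [unif, Measure.smul_apply, Measure.restrict_apply MeasurableSet.univ, univ_inter,
    Real.volume_Icc, smul_eq_mul, ENNReal.inv_mul_cancel] <;> simp [hab]

theorem cdf_unif (hab : a < b) : cdf (unif a b) = unifCdf a b := by
  have := isProbabilityMeasure_unif hab
  have hba : 0 < b - a := sub_pos.2 hab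
  funext u
  rw [cdf_eq_real, measureReal_def, unif_Iic, ENNReal.toReal_mul, ENNReal.toReal_inv,
    ENNReal.toReal_ofReal hba.le, ENNReal.toReal_ofReal']
  rcases le_total b u with hbu | hub
  · rw [unifCdf_of_ge hab hbu, min_eq_left hbu, max_eq_left hba.le, inv_mul_cancel₀ hba.ne']
  · rcases le_total u a with hua | hau
    · rw [unifCdf_of_le hab hua, min_eq_right hub, max_eq_right (by linarith), mul_zero]
    · rw [unifCdf_of_mem_Icc hab ⟨hau, hub⟩, min_eq_right hub, max_eq_left (by linarith),
        inv_mul_eq_div]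

theorem integrableOn_cdf_unif (hab : a < b) (u : ℝ) : IntegrableOn (cdf (unif a b)) (Iic u) := by
  rw [cdf_unif hab]
  exact integrableOn_Iic_of_continuous_of_eqOn_Iic_zero (continuous_unifCdf a b)
    fun z hz => unifCdf_of_le hab hz

theorem setIntegral_Iic_cdf_unif_of_le (hab : a < b) (hu : u ≤ a) :
    ∫ z in Iic u, cdf (unif a b) z = 0 := by
  rw [cdf_unif hab, setIntegral_congr_fun measurableSet_Iic
    fun z hz => unifCdf_of_le hab (le_trans hz hu)]
  exact integral_zero _ _

theorem setIntegral_Iic_cdf_unif_of_mem_Icc (hab : a < b) (hu : u ∈ Icc a b) :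
    ∫ z in Iic u, cdf (unif a b) z = (u - a) ^ 2 / (2 * (b - a)) := by
  rw [cdf_unif hab, setIntegral_Iic_eq_intervalIntegral_of_eqOn_Iic_zero (continuous_unifCdf a b)
      (fun z hz => unifCdf_of_le hab hz) hu.1,
    intervalIntegral.integral_congr (g := fun z => (z - a) / (b - a)) fun z hz =>
      unifCdf_of_mem_Icc hab ⟨by rw [uIcc_of_le hu.1] at hz; exact hz.1,
        by rw [uIcc_of_le hu.1] at hz; exact hz.2.trans hu.2⟩]
  simp only [intervalIntegral.integral_div, intervalIntegral.integral_comp_sub_right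
    (fun z => z) a, integral_id]
  field_simp
  ring

theorem setIntegral_Iic_cdf_unif_of_ge (hab : a < b) (hu : b ≤ u) :
    ∫ z in Iic u, cdf (unif a b) z = u - (a + b) / 2 := by
  rw [← Iic_union_Ioc_eq_Iic hu, setIntegral_union (Iic_disjoint_Ioc le_rfl) measurableSet_Ioc
      (integrableOn_cdf_unif hab b) ((integrableOn_cdf_unif hab u).mono_set Ioc_subset_Iic_self),
    setIntegral_Iic_cdf_unif_of_mem_Icc hab ⟨hab.le, le_rfl⟩, cdf_unif hab,
    setIntegral_congr_fun measurableSet_Ioc fun z hz => unifCdf_of_ge hab hz.1.le,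
    setIntegral_const, Real.volume_real_Ioc_of_le hu, smul_eq_mul, mul_one]
  field_simp
  ring

theorem setIntegral_Iic_cdf_unif_pos (hab : a < b) (hu : a < u) :
    0 < ∫ z in Iic u, cdf (unif a b) z := by
  rcases le_total u b with hub | hbu
  · rw [setIntegral_Iic_cdf_unif_of_mem_Icc hab ⟨hu.le, hub⟩]
    exact div_pos (pow_pos (sub_pos.2 hu) 2) (by linarith)
  · rw [setIntegral_Iic_cdf_unif_of_ge hab hbu]
    linarith

end Uniform

theorem cdf_dirac (c : ℝ) : ⇑(cdf (Measure.dirac c)) = (Ici c).indicator 1 := by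
  funext u
  rw [cdf_eq_real, measureReal_def, Measure.dirac_apply' c measurableSet_Iic]
  by_cases hcu : c ≤ u <;> simp [hcu]

theorem integrableOn_cdf_dirac (c u : ℝ) : IntegrableOn (cdf (Measure.dirac c)) (Iic u) := by
  rw [cdf_dirac, IntegrableOn, integrable_indicator_iff measurableSet_Ici]
  exact integrableOn_const (by simp [Measure.restrict_apply measurableSet_Ici, Ici_inter_Iic])

theorem setIntegral_Iic_cdf_dirac (c u : ℝ) :
    ∫ z in Iic u, cdf (Measure.dirac c) z = max (u - c) 0 := by
  rw [cdf_dirac, setIntegral_indicator measurableSet_Ici, Iic_inter_Ici]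
  simp [Real.volume_real_Icc]

theorem map_unif_affine {a b c ρ m : ℝ} (hab : a < b) (hρ : 0 < ρ) :
    (unif a b).map (fun z => c + ρ * (z - m)) = unif (c + ρ * (a - m)) (c + ρ * (b - m)) := by
  have hmeas : Measurable fun z : ℝ => c + ρ * (z - m) := by fun_prop
  have := isProbabilityMeasure_unif hab
  have := Measure.isProbabilityMeasure_map (μ := unif a b) hmeas.aemeasurable
  have := isProbabilityMeasure_unif (a := c + ρ * (a - m)) (b := c + ρ * (b - m)) (by nlinarith)
  refine Measure.eq_of_cdf _ _ (StieltjesFunction.ext fun u => ?_)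
  have hpre : (fun z : ℝ => c + ρ * (z - m)) ⁻¹' Iic u = Iic ((u - c) / ρ + m) := by
    ext z
    simp only [mem_preimage, mem_Iic, ← sub_le_iff_le_add, le_div_iff₀ hρ]
    constructor <;> intro hz <;> linarith
  rw [cdf_eq_real, map_measureReal_apply hmeas measurableSet_Iic, hpre, ← cdf_eq_real,
    cdf_unif hab, cdf_unif (by nlinarith), unifCdf, unifCdf]
  congr 2
  have hba : b - a ≠ 0 := sub_ne_zero.2 hab.ne'
  rw [show c + ρ * (b - m) - (c + ρ * (a - m)) = ρ * (b - a) by ring]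
  field_simp
  ring

theorem SSD.le_of_unif_unif {α β a b : ℝ} (hαβ : α < β) (hab : a < b)
    (h : SSD (unif α β) (unif a b)) : (a + b) / 2 ≤ (α + β) / 2 ∧ a ≤ α := by
  have hle := fun u =>
    h.setIntegral_cdf_le (integrableOn_cdf_unif hαβ u) (integrableOn_cdf_unif hab u)
  constructor
  · have := hle (max β b)
    rw [setIntegral_Iic_cdf_unif_of_ge hαβ (le_max_left _ _),
      setIntegral_Iic_cdf_unif_of_ge hab (le_max_right _ _)] at this
    linarith
  · by_contra! hαa
    have := hle a
    rw [setIntegral_Iic_cdf_unif_of_le hab le_rfl] at this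
    linarith [setIntegral_Iic_cdf_unif_pos hαβ hαa]

theorem SSD.le_of_dirac_unif {c a b : ℝ} (hab : a < b) (h : SSD (Measure.dirac c) (unif a b)) :
    (a + b) / 2 ≤ c ∧ a ≤ c := by
  have hle := fun u =>
    h.setIntegral_cdf_le (integrableOn_cdf_dirac c u) (integrableOn_cdf_unif hab u)
  constructor
  · have := hle (max c b)
    rw [setIntegral_Iic_cdf_dirac, setIntegral_Iic_cdf_unif_of_ge hab (le_max_right _ _),
      max_eq_left (sub_nonneg.2 (le_max_left _ _))] at this
    linarith
  · have := hle a
    rw [setIntegral_Iic_cdf_dirac, setIntegral_Iic_cdf_unif_of_le hab le_rfl] at this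
    linarith [le_max_left (a - c) 0]

theorem SSD.le_of_map_unif {aN bN a b c ρ : ℝ} (hN : aN < bN) (hab : a < b) (hρ : 0 ≤ ρ)
    (h : SSD ((unif aN bN).map fun z => c + ρ * (z - (aN + bN) / 2)) (unif a b)) :
    (a + b) / 2 ≤ c ∧ a ≤ c + ρ * (aN - (aN + bN) / 2) := by
  rcases hρ.eq_or_lt with rfl | hρ
  · have := isProbabilityMeasure_unif hN
    simp only [zero_mul, add_zero, Measure.map_const, measure_univ, one_smul] at h ⊢
    exact h.le_of_dirac_unif hab
  · rw [map_unif_affine hN hρ] at h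
    have := h.le_of_unif_unif (by nlinarith) hab
    constructor <;> linarith

theorem mem_core_ite_of_le {N : Type*} [Fintype N] [DecidableEq N] {w : Finset N → ℝ}
    {x : N → ℝ} (hle : ∀ S : Finset N, S.Nonempty → w S ≤ ∑ i ∈ S, x i)
    (hsum : ∑ i, x i = w Finset.univ) : x ∈ core fun S => if S = ∅ then 0 else w S := by
  refine ⟨fun S => ?_, ?_⟩
  · rcases S.eq_empty_or_nonempty with rfl | hS
    · simp
    · simpa only [if_neg hS.ne_empty] using hle S hS
  · dsimp only
    split_ifs with hN
    · rw [hN, Finset.sum_empty]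
    · exact hsum

theorem ssd_core_uniform_necessary_general {N : Type*} [Fintype N] [DecidableEq N]
    (a b : Finset N → ℝ)
    (hab : ∀ S : Finset N, S.Nonempty → a S < b S)
    (d r : N → ℝ)
    (hr : ∀ i, 0 ≤ r i)
    (hdN : ∑ i : N, d i = (a Finset.univ + b Finset.univ) / 2)
    (hrN : ∑ i : N, r i = 1)
    (hssd : ∀ S : Finset N, S.Nonempty →
      SSD ((unif (a Finset.univ) (b Finset.univ)).map
          (fun z =>
            (∑ i ∈ S, d i) +
              (∑ i ∈ S, r i) * (z - (a Finset.univ + b Finset.univ) / 2)))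
        (unif (a S) (b S))) :
    (core (fun S => if S = ∅ then 0 else (a S + b S) / 2)).Nonempty ∧
      (core (fun S => if S = ∅ then 0 else a S)).Nonempty := by
  set δ := a Finset.univ - (a Finset.univ + b Finset.univ) / 2
  have hbounds (S : Finset N) (hS : S.Nonempty) :
      (a S + b S) / 2 ≤ ∑ i ∈ S, d i ∧ a S ≤ ∑ i ∈ S, d i + (∑ i ∈ S, r i) * δ :=
    (hssd S hS).le_of_map_unif (hab _ (hS.mono (Finset.subset_univ S))) (hab S hS)
      (Finset.sum_nonneg fun i _ => hr i)
  have hsum (S : Finset N) : ∑ i ∈ S, (d i + r i * δ) = ∑ i ∈ S, d i + (∑ i ∈ S, r i) * δ := by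
    rw [Finset.sum_add_distrib, Finset.sum_mul]
  refine ⟨⟨d, mem_core_ite_of_le (fun S hS => (hbounds S hS).1) hdN⟩,
    ⟨fun i => d i + r i * δ, mem_core_ite_of_le (fun S hS => hsum S ▸ (hbounds S hS).2) ?_⟩⟩
  rw [hsum, hdN, hrN]
  ring

/-- Under uniformly distributed coalitional values, nonemptiness of the SSD-core with
transfer payments implies nonemptiness of the cores of both the mean game and the
lower bound game. -/
theorem ssd_core_uniform_necessary {N : Type*} [Fintype N] [DecidableEq N] [Nonempty N]
    (a b : Finset N → ℝ)
    (hab : ∀ S : Finset N, S.Nonempty → a S < b S)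
    (d r : N → ℝ)
    (hr : ∀ i, 0 ≤ r i)
    (hdN : ∑ i : N, d i = (a Finset.univ + b Finset.univ) / 2)
    (hrN : ∑ i : N, r i = 1)
    (hssd : ∀ S : Finset N, S.Nonempty →
      SSD ((unif (a Finset.univ) (b Finset.univ)).map
          (fun z =>
            (∑ i ∈ S, d i) +
              (∑ i ∈ S, r i) * (z - (a Finset.univ + b Finset.univ) / 2)))
        (unif (a S) (b S))) :
    (core (fun S => if S = ∅ then 0 else (a S + b S) / 2)).Nonempty ∧
      (core (fun S => if S = ∅ then 0 else a S)).Nonempty :=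
  ssd_core_uniform_necessary_general a b hab d r hr hdN hrN hssd
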